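/- Frobenius relation for addition in linear relations: for a field k, the relational composites (+ ⊕ id) ∘ (id ⊕ +†), (+† ∘ +), and (id ⊕ +) ∘ (+† ⊕ id), all as linear relations from k² to k², are equal, and each equals the linear relation {(x₁,x₂,y₁,y₂) ∈ k² × k² : x₁ + x₂ = y₁ + y₂}. -/
import Mathlib

/-- Relational composition: first `L : U ⇸ V`, then `L' : V ⇸ W`. -/
def rcomp {α β γ : Type*} (L : Set (α × β)) (L' : Set (β × γ)) : Set (α × γ) :=
  {p | ∃ v, (p.1, v) ∈ L ∧ (v, p.2) ∈ L'}

/-- Addition `+ : k² ⇸ k` as a relation. -/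
def addRel (k : Type*) [Field k] : Set ((k × k) × k) := {p | p.2 = p.1.1 + p.1.2}

/-- Coaddition `+† : k ⇸ k²` as a relation. -/
def coaddRel (k : Type*) [Field k] : Set (k × (k × k)) := {p | p.1 = p.2.1 + p.2.2}

/-- `id ⊕ +† : k² ⇸ k³`: identity on the first wire, coaddition on the second. -/
def idCoadd (k : Type*) [Field k] : Set ((k × k) × (k × k × k)) :=
  {p | p.2.1 = p.1.1 ∧ p.1.2 = p.2.2.1 + p.2.2.2}

/-- `+ ⊕ id : k³ ⇸ k²`: addition on the first two wires, identity on the third. -/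
def addId (k : Type*) [Field k] : Set ((k × k × k) × (k × k)) :=
  {p | p.2.1 = p.1.1 + p.1.2.1 ∧ p.2.2 = p.1.2.2}

/-- `+† ⊕ id : k² ⇸ k³`: coaddition on the first wire, identity on the second. -/
def coaddId (k : Type*) [Field k] : Set ((k × k) × (k × k × k)) :=
  {p | p.1.1 = p.2.1 + p.2.2.1 ∧ p.2.2.2 = p.1.2}

/-- `id ⊕ + : k³ ⇸ k²`: identity on the first wire, addition on the last two. -/
def idAdd (k : Type*) [Field k] : Set ((k × k × k) × (k × k)) :=
  {p | p.2.1 = p.1.1 ∧ p.2.2 = p.1.2.1 + p.1.2.2}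

/-- Frobenius relation for addition: `(+ ⊕ id) ∘ (id ⊕ +†)`, `+† ∘ +`, and
`(id ⊕ +) ∘ (+† ⊕ id)` all equal the relation `{(x₁,x₂,y₁,y₂) : x₁+x₂ = y₁+y₂}`. -/
theorem frobenius_for_addition (k : Type*) [Field k] :
    rcomp (idCoadd k) (addId k) =
      {p : (k × k) × (k × k) | p.1.1 + p.1.2 = p.2.1 + p.2.2} ∧
    rcomp (addRel k) (coaddRel k) =
      {p : (k × k) × (k × k) | p.1.1 + p.1.2 = p.2.1 + p.2.2} ∧
    rcomp (coaddId k) (idAdd k) =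
      {p : (k × k) × (k × k) | p.1.1 + p.1.2 = p.2.1 + p.2.2} := by
  refine ⟨?_, ?_, ?_⟩ <;> ext ⟨⟨x₁, x₂⟩, ⟨y₁, y₂⟩⟩ <;>
    simp only [rcomp, idCoadd, addId, addRel, coaddRel, coaddId, idAdd,
      Set.mem_setOf_eq, Prod.exists]
  · constructor
    · rintro ⟨a, b, c, ⟨h1, h2⟩, h3, h4⟩; subst h1 h3 h4; linear_combination h2
    · intro h; exact ⟨x₁, y₁ - x₁, y₂, ⟨rfl, by linear_combination h⟩, by ring, rfl⟩
  · constructor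
    · rintro ⟨a, h1, h2⟩; rw [← h1, h2]
    · intro h; exact ⟨x₁ + x₂, rfl, by linear_combination h⟩
  · constructor
    · rintro ⟨a, b, c, ⟨h1, h2⟩, h3, h4⟩; subst h2 h3 h4; linear_combination h1
    · intro h; exact ⟨y₁, x₁ - y₁, x₂, ⟨by ring, rfl⟩, rfl, by linear_combination -h⟩
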